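/- arXiv:2408.11802 — 2 statements merged into one kernel-verified Lean document; each statement's English description precedes it below -/
import Mathlib

section
/- The map sending λ_{n,s} to (n,s) is an injective monoid homomorphism from the monoid of endomorphisms {λ_{n,s} : n ≥ 1, 0 ≤ s < n} of C₊ (under composition) into the semidirect product (ℕ₊, ·) ⋉_φ (ℕ, +), where the multiplication is (n₁,s₁)·(n₂,s₂) = (n₁n₂, s₁n₂ + s₂). -/
def bmul (x y : ℕ × ℕ) : ℕ × ℕ :=
  (x.1 + y.1 - min x.2 y.1, x.2 + y.2 - min x.2 y.1)

abbrev Cplus := {x : ℕ × ℕ // x.1 ≤ x.2}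

instance : Mul Cplus :=
  ⟨fun x y => ⟨bmul x.1 y.1, by have hx := x.2; have hy := y.2; simp only [bmul]; omega⟩⟩

instance : One Cplus := ⟨⟨(0, 0), le_refl 0⟩⟩

theorem Cplus.mul_def (x y : Cplus) : (x * y).1 = bmul x.1 y.1 := rfl

theorem Cplus.one_def : (1 : Cplus).1 = (0, 0) := rfl

instance : Monoid Cplus where
  mul_assoc x y z := Subtype.ext (by
    simp only [Cplus.mul_def, bmul, Prod.ext_iff]; omega)
  one_mul x := Subtype.ext (by
    have := x.2
    simp only [Cplus.mul_def, Cplus.one_def, bmul, Prod.ext_iff]; omega)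
  mul_one x := Subtype.ext (by
    have := x.2
    simp only [Cplus.mul_def, Cplus.one_def, bmul, Prod.ext_iff]; omega)

def lam (k : ℕ) : Cplus → Cplus :=
  fun x => ⟨(k * x.1.1, k * x.1.2), Nat.mul_le_mul_left k x.2⟩

def sig (l m : ℕ) : Cplus → Cplus := fun x =>
  if x.1.1 = x.1.2 then 1 else ⟨(l, l + m * (x.1.2 - x.1.1)), by omega⟩

def lamns (n s : ℕ) : Cplus → Cplus := fun x =>
  if x.1.1 = 0 then ⟨(0, n * x.1.2), Nat.zero_le _⟩
  else ⟨(n * x.1.1 - s, n * x.1.2 - s), by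
    have := Nat.mul_le_mul_left n x.2; omega⟩

def vsig : Cplus → Cplus := fun x =>
  if x.1 = (0, 0) then 1 else ⟨(x.1.1 + 1, x.1.2 + 1), by have := x.2; omega⟩

def bpow (x : ℕ × ℕ) : ℕ → ℕ × ℕ
  | 0 => (0, 0)
  | n + 1 => bmul (bpow x n) x

theorem lamns_val_of_fst_eq_zero (n s : ℕ) {x : Cplus} (hx : x.1.1 = 0) :
    (lamns n s x).1 = (0, n * x.1.2) := by
  simp [lamns, hx]

theorem lamns_val_of_fst_ne_zero (n s : ℕ) {x : Cplus} (hx : x.1.1 ≠ 0) :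
    (lamns n s x).1 = (n * x.1.1 - s, n * x.1.2 - s) := by
  simp [lamns, hx]

theorem lamns_one_zero : lamns 1 0 = id := by
  funext x
  refine Subtype.ext ?_
  by_cases hx : x.1.1 = 0
  · rw [lamns_val_of_fst_eq_zero _ _ hx, one_mul, id, ← hx]
  · rw [lamns_val_of_fst_ne_zero _ _ hx, one_mul, one_mul, Nat.sub_zero, Nat.sub_zero, id]

/-- `n` is read off at `(0, 1)`; once `n ≥ 1` is known, `s` is read off at any `(k, k)` with
`k > s₁, s₂`, where no truncated subtraction occurs. -/
theorem lamns_eq_lamns_iff {n₁ s₁ n₂ s₂ : ℕ} (hn₁ : 0 < n₁) :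
    lamns n₁ s₁ = lamns n₂ s₂ ↔ n₁ = n₂ ∧ s₁ = s₂ := by
  refine ⟨fun h => ?_, fun ⟨hn, hs⟩ => hn ▸ hs ▸ rfl⟩
  have at_zero_one := congrArg Subtype.val (congrFun h ⟨(0, 1), zero_le_one⟩)
  simp only [lamns_val_of_fst_eq_zero (x := ⟨(0, 1), zero_le_one⟩) _ _ rfl, Prod.mk.injEq,
    mul_one, true_and] at at_zero_one
  subst at_zero_one
  set k := s₁ + s₂ + 1
  have at_diag := congrArg Subtype.val (congrFun h ⟨(k, k), le_rfl⟩)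
  simp only [lamns_val_of_fst_ne_zero (x := ⟨(k, k), le_rfl⟩) _ _ (show k ≠ 0 by omega),
    Prod.mk.injEq, and_self] at at_diag
  have hk : k ≤ n₁ * k := Nat.le_mul_of_pos_left k hn₁
  omega

/-- The condition `s₁ < n₁` keeps the first coordinate of `λ_{n₁,s₁} x` positive when that of
`x` is, so that `λ_{n₂,s₂}` applies its affine branch to it. -/
theorem lamns_comp_lamns {n₁ s₁ : ℕ} (n₂ s₂ : ℕ) (hs₁ : s₁ < n₁) :
    lamns n₂ s₂ ∘ lamns n₁ s₁ = lamns (n₁ * n₂) (s₁ * n₂ + s₂) := by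
  funext x
  refine Subtype.ext ?_
  by_cases hx : x.1.1 = 0
  · have himage : (lamns n₁ s₁ x).1.1 = 0 := by rw [lamns_val_of_fst_eq_zero _ _ hx]
    rw [Function.comp_apply, lamns_val_of_fst_eq_zero _ _ himage, lamns_val_of_fst_eq_zero _ _ hx,
      lamns_val_of_fst_eq_zero _ _ hx, mul_left_comm, mul_assoc]
  · have hle : n₁ ≤ n₁ * x.1.1 := Nat.le_mul_of_pos_right n₁ (Nat.pos_of_ne_zero hx)
    have himage : (lamns n₁ s₁ x).1.1 ≠ 0 := by rw [lamns_val_of_fst_ne_zero _ _ hx]; omega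
    rw [Function.comp_apply, lamns_val_of_fst_ne_zero _ _ himage, lamns_val_of_fst_ne_zero _ _ hx,
      lamns_val_of_fst_ne_zero _ _ hx]
    simp only [Nat.mul_sub, Nat.sub_sub, mul_left_comm n₂, mul_comm n₂ s₁, mul_assoc]

/-- λ_{n,s} ↦ (n,s) is an injective monoid homomorphism from the monoid
{λ_{n,s} : n ≥ 1, 0 ≤ s < n} under composition into the semidirect product
(ℕ₊,·) ⋉ (ℕ,+) with product (n₁,s₁)·(n₂,s₂) = (n₁n₂, s₁n₂+s₂). -/
theorem lamns_into_semidirect :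
    lamns 1 0 = id ∧
    ∀ n₁ s₁ n₂ s₂ : ℕ, 1 ≤ n₁ → s₁ < n₁ → 1 ≤ n₂ → s₂ < n₂ →
      (lamns n₁ s₁ = lamns n₂ s₂ → n₁ = n₂ ∧ s₁ = s₂) ∧
      lamns n₂ s₂ ∘ lamns n₁ s₁ = lamns (n₁ * n₂) (s₁ * n₂ + s₂) :=
  ⟨lamns_one_zero, fun _ _ n₂ s₂ hn₁ hs₁ _ _ =>
    ⟨(lamns_eq_lamns_iff hn₁).mp, lamns_comp_lamns n₂ s₂ hs₁⟩⟩
end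

section
/- Let ε be an injective monoid endomorphism of C₊ with ε(0,1) = (n, n+p) for some n, p ≥ 1. Then there exists s ∈ {0,…,p-1} such that ε equals the composition of λ_{p,s} followed by ςⁿ. -/
/-!
Idempotents of C₊ are the diagonal elements (i, i), so ε sends (i, i) to some (gᵢ, gᵢ).
Applying ε to the relation a · (i+1, i+1) = (i, i) · a gives g₁ ≤ n + p, and gᵢ₊₁ = gᵢ + p
as soon as gᵢ > n. If gᵢ ≤ n for some i ≥ 1, then ε((i, i) · a) = (gᵢ, gᵢ) · ε(a) = ε(a),
contradicting injectivity; hence gᵢ = n + p·i - s with s = n + p - g₁ < p. Since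
(i, j) = (i, i) · aʲ⁻ⁱ, these values determine ε, and they agree with those of ςⁿ ∘ λ_{p,s}.
-/

namespace Cplus

def diag (i : ℕ) : Cplus := ⟨(i, i), le_rfl⟩

def apow (k : ℕ) : Cplus := ⟨(0, k), Nat.zero_le k⟩

theorem mk_eq_mk {a b c d : ℕ} {h₁ : a ≤ b} {h₂ : c ≤ d} :
    (⟨(a, b), h₁⟩ : Cplus) = ⟨(c, d), h₂⟩ ↔ a = c ∧ b = d := by
  simp [Subtype.ext_iff, Prod.ext_iff]

theorem mk_mul_mk {a b c d : ℕ} {h₁ : a ≤ b} {h₂ : c ≤ d} :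
    (⟨(a, b), h₁⟩ : Cplus) * ⟨(c, d), h₂⟩
      = ⟨(a + c - min b c, b + d - min b c), by omega⟩ := rfl

theorem diag_zero : diag 0 = 1 := rfl

theorem isIdempotentElem_diag (i : ℕ) : IsIdempotentElem (diag i) := by
  simp only [IsIdempotentElem, diag, mk_mul_mk, mk_eq_mk]
  omega

theorem eq_diag_of_isIdempotentElem {y : Cplus} (hy : IsIdempotentElem y) : y = diag y.1.1 := by
  obtain ⟨⟨u, v⟩, huv⟩ := y
  change u ≤ v at huv
  simp only [IsIdempotentElem, mk_mul_mk, mk_eq_mk] at hy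
  simp only [diag, mk_eq_mk, true_and]
  omega

theorem apow_eq_pow (k : ℕ) : apow k = apow 1 ^ k := by
  induction k with
  | zero => rfl
  | succ k ih =>
    rw [pow_succ, ← ih]
    simp only [apow, mk_mul_mk, mk_eq_mk]
    omega

theorem diag_mul_apow (i k : ℕ) : diag i * apow k = ⟨(i, i + k), Nat.le_add_right i k⟩ := by
  simp only [diag, apow, mk_mul_mk, mk_eq_mk]
  omega

theorem apow_one_mul_diag_succ (i : ℕ) : apow 1 * diag (i + 1) = diag i * apow 1 := by
  simp only [diag, apow, mk_mul_mk, mk_eq_mk]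
  omega

theorem diag_mul_eq_self_of_le {g : ℕ} {x : Cplus} (h : g ≤ x.1.1) : diag g * x = x := by
  obtain ⟨⟨u, v⟩, huv⟩ := x
  simp only [diag, mk_mul_mk, mk_eq_mk] at h ⊢
  omega

theorem diag_mul_pow_of_le {n p m : ℕ} (h : n ≤ m) (k : ℕ) :
    diag m * (⟨(n, n + p), Nat.le_add_right n p⟩ : Cplus) ^ k = ⟨(m, m + k * p), by omega⟩ := by
  induction k with
  | zero => simp [diag]
  | succ k ih =>
    rw [pow_succ, ← mul_assoc, ih, mk_mul_mk, mk_eq_mk, Nat.succ_mul]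
    omega

theorem mk_pow_succ (n p k : ℕ) :
    (⟨(n, n + p), Nat.le_add_right n p⟩ : Cplus) ^ (k + 1)
      = ⟨(n, n + (k + 1) * p), by omega⟩ := by
  calc _ = diag n * (⟨(n, n + p), Nat.le_add_right n p⟩ : Cplus) ^ (k + 1) := by
        rw [pow_succ', ← mul_assoc, diag_mul_eq_self_of_le (g := n) le_rfl]
    _ = _ := diag_mul_pow_of_le le_rfl _

end Cplus

theorem vsig_iterate_one (n : ℕ) : vsig^[n] 1 = 1 :=
  Function.iterate_fixed (by simp [vsig, Cplus.one_def]) n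

theorem vsig_iterate_mk {a b : ℕ} (hab : a ≤ b) (hb : b ≠ 0) (n : ℕ) :
    vsig^[n] ⟨(a, b), hab⟩ = ⟨(a + n, b + n), by omega⟩ := by
  induction n generalizing a b with
  | zero => rfl
  | succ n ih =>
    have hstep : vsig ⟨(a, b), hab⟩ = ⟨(a + 1, b + 1), by omega⟩ := by
      simp [vsig, hb]
    rw [Function.iterate_succ_apply, hstep, ih _ (by omega), Cplus.mk_eq_mk]
    omega

theorem lamns_apply_zero_fst (p s j : ℕ) :
    lamns p s ⟨(0, j), Nat.zero_le j⟩ = ⟨(0, p * j), Nat.zero_le _⟩ := rfl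

theorem lamns_apply_of_pos {p s i j : ℕ} (hij : i ≤ j) (hi : 0 < i) :
    lamns p s ⟨(i, j), hij⟩
      = ⟨(p * i - s, p * j - s), by have := Nat.mul_le_mul_left p hij; omega⟩ :=
  if_neg hi.ne'

namespace Cplus

section Endomorphism

variable (f : Cplus →* Cplus) {n p : ℕ}

theorem map_diag (i : ℕ) : f (diag i) = diag (f (diag i)).1.1 :=
  eq_diag_of_isIdempotentElem ((isIdempotentElem_diag i).map f)

variable (ha : f (apow 1) = ⟨(n, n + p), Nat.le_add_right n p⟩)
include ha

theorem map_diag_one_le : ∃ m ≤ n + p, f (diag 1) = diag m := by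
  obtain ⟨m, hm⟩ : ∃ m, f (diag 1) = diag m := ⟨_, map_diag f 1⟩
  refine ⟨m, ?_, hm⟩
  have h := congrArg f (apow_one_mul_diag_succ 0)
  rw [map_mul, map_mul, ha, diag_zero, map_one, one_mul, hm] at h
  simp only [diag, mk_mul_mk, mk_eq_mk] at h
  omega

theorem map_diag_succ {i m : ℕ} (hm : n < m) (hi : f (diag i) = diag m) :
    f (diag (i + 1)) = diag (m + p) := by
  obtain ⟨m', hm'⟩ : ∃ m', f (diag (i + 1)) = diag m' := ⟨_, map_diag f (i + 1)⟩
  have h := congrArg f (apow_one_mul_diag_succ i)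
  rw [map_mul, map_mul, ha, hi, hm'] at h
  rw [hm']
  simp only [diag, mk_mul_mk, mk_eq_mk] at h ⊢
  omega

theorem lt_of_map_diag_eq (hf : Function.Injective f) {i m : ℕ} (hi : 1 ≤ i)
    (hm : f (diag i) = diag m) : n < m := by
  by_contra! hle
  have h : f (diag i * apow 1) = f (apow 1) := by
    rw [map_mul, hm, ha, diag_mul_eq_self_of_le hle]
  have h' := hf h
  simp only [diag, apow, mk_mul_mk, mk_eq_mk] at h'
  omega

theorem exists_map_diag_eq (hf : Function.Injective f) :
    ∃ s < p, ∀ i, 1 ≤ i → f (diag i) = diag (n + p * i - s) := by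
  obtain ⟨m, hmp, hm⟩ := map_diag_one_le f ha
  have hnm := lt_of_map_diag_eq f ha hf le_rfl hm
  refine ⟨n + p - m, by omega, fun i hi => ?_⟩
  induction i, hi using Nat.le_induction with
  | base => rw [hm]; congr 1; omega
  | succ i hi ih =>
    have hpi : p ≤ p * i := Nat.le_mul_of_pos_right p hi
    rw [map_diag_succ f ha (by omega) ih, Nat.mul_succ]
    congr 1
    omega

theorem eq_vsig_iterate_comp_lamns {s : ℕ} (hs : s < p)
    (hdiag : ∀ i, 1 ≤ i → f (diag i) = diag (n + p * i - s)) :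
    ⇑f = vsig^[n] ∘ lamns p s := by
  funext x
  obtain ⟨⟨i, j⟩, hij⟩ := x
  change i ≤ j at hij
  obtain ⟨k, rfl⟩ := Nat.exists_eq_add_of_le hij
  rw [Function.comp_apply]
  conv_lhs => rw [← diag_mul_apow, map_mul, apow_eq_pow, map_pow, ha]
  rcases Nat.eq_zero_or_pos i with rfl | hi
  · rw [lamns_apply_zero_fst, diag_zero, map_one, one_mul]
    rcases k with _ | k
    · exact (vsig_iterate_one n).symm
    · have hp : 0 < p := by omega
      rw [mk_pow_succ, vsig_iterate_mk _ (by positivity), mk_eq_mk]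
      constructor <;> ring
  · have hpi : p ≤ p * i := Nat.le_mul_of_pos_right p hi
    have hpk : p * i + k * p = p * (i + k) := by ring
    rw [hdiag i hi, diag_mul_pow_of_le (by omega), lamns_apply_of_pos _ hi,
      vsig_iterate_mk _ (by omega), mk_eq_mk]
    omega

end Endomorphism

end Cplus

/-- An injective monoid endomorphism ε of C₊ with ε(a) = bⁿaⁿ⁺ᵖ equals λ_{p,s}
followed by ςⁿ for some s ∈ {0,…,p-1}. -/
theorem injective_endo_eq_lamns_vsig (ε : Cplus → Cplus)
    (hmul : ∀ x y : Cplus, ε (x * y) = ε x * ε y) (hone : ε 1 = 1)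
    (hinj : Function.Injective ε) (n p : ℕ)
    (ha : ε ⟨(0, 1), Nat.zero_le 1⟩ = ⟨(n, n + p), by omega⟩) :
    ∃ s, s < p ∧ ε = vsig^[n] ∘ lamns p s := by
  let f : Cplus →* Cplus := { toFun := ε, map_one' := hone, map_mul' := hmul }
  obtain ⟨s, hs, hdiag⟩ := Cplus.exists_map_diag_eq f ha hinj
  exact ⟨s, hs, Cplus.eq_vsig_iterate_comp_lamns f ha hs hdiag⟩
end
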